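/- Every sum-symmetric matrix A ∈ ℝ^{n×n} (nonnegative entries, each row sum equal to the corresponding column sum) can be written as a finite nonnegative linear combination of circuit matrices: there exist finitely many index sets α_k ⊆ {1,…,n}, permutations π_k of α_k, and positive reals λ_k such that A = Σ_k λ_k B(α_k, π_k). -/

import Mathlib

/-!
Following a positive entry `A i j` one can always continue: the column sum of `j` is positive,
hence so is its row sum. A successor map built this way has a periodic point, and its periodic
orbits are cycles of positive entries, i.e. a circuit `B(α, π)` with `A i (π i) > 0` on `α`.
Subtracting the least of these entries times `B(α, π)` keeps `A` nonnegative and sum-symmetric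
and kills a positive entry, so induction on the number of positive entries finishes the proof.
-/

open Matrix

/-- The circuit matrix `B(α, π)`: entries `1` if `i, j ∈ α` and `j = π i`, else `0`. -/
def circuitMatrix (n : ℕ) (α : Finset (Fin n)) (e : Equiv.Perm (Fin n)) :
    Matrix (Fin n) (Fin n) ℝ :=
  Matrix.of fun i j => if i ∈ α ∧ j ∈ α ∧ j = e i then 1 else 0

open Finset

theorem Function.exists_iterate_mem_periodicPts {α : Type*} [Finite α] (f : α → α) (x : α) :
    ∃ m, f^[m] x ∈ periodicPts f := by
  obtain ⟨m, n, hne, heq⟩ := Finite.exists_ne_map_eq_of_infinite fun k => f^[k] x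
  wlog hlt : m < n generalizing m n
  · exact this n m hne.symm heq.symm (by omega)
  refine ⟨m, mk_mem_periodicPts (n := n - m) (by omega) ?_⟩
  rw [IsPeriodicPt, IsFixedPt, ← iterate_add_apply, Nat.sub_add_cancel hlt.le]
  exact heq.symm

theorem exists_perm_cycle_of_rel {α : Type*} [Finite α] (r : α → α → Prop) {a b : α}
    (hab : r a b) (hr : ∀ x y, r x y → ∃ z, r y z) :
    ∃ (t : Finset α) (e : Equiv.Perm α), t.Nonempty ∧ (∀ x, x ∈ t ↔ e x ∈ t) ∧
      ∀ x ∈ t, r x (e x) := by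
  classical
  -- Falling back to `b` makes every value of `f` a point with an `r`-successor.
  let f : α → α := fun x => if h : ∃ y, r x y then h.choose else b
  have hsucc : ∀ w, ∃ z, r (f w) z := by
    intro w
    by_cases h : ∃ y, r w y
    · exact hr _ _ (by simpa only [f, dif_pos h] using h.choose_spec)
    · simpa only [f, dif_neg h] using hr a b hab
  have hstep : ∀ x ∈ Set.range f, r x (f x) := by
    rintro _ ⟨w, rfl⟩
    simpa only [f, dif_pos (hsucc w)] using (hsucc w).choose_spec
  set P := Function.periodicPts f
  have hP : Set.BijOn f P P := Function.bijOn_periodicPts f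
  let e : Equiv.Perm α := Equiv.Perm.ofSubtype (hP.equiv f : Equiv.Perm P)
  have he : ∀ x ∈ P, e x = f x := fun x hx => by
    simp [e, Equiv.Perm.ofSubtype_apply_of_mem _ hx, Set.BijOn.equiv]
  obtain ⟨m, hm⟩ := Function.exists_iterate_mem_periodicPts f a
  refine ⟨P.toFinite.toFinset, e, ⟨_, P.toFinite.mem_toFinset.2 hm⟩, fun x => ?_, fun x hx => ?_⟩
  · simpa only [Set.Finite.mem_toFinset] using (Equiv.Perm.ofSubtype_apply_mem_iff_mem _ x).symm
  · rw [Set.Finite.mem_toFinset] at hx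
    rw [he x hx]
    exact hstep x (Function.periodicPts_subset_range hx)

theorem card_filter_pos_lt_of_le {κ R : Type*} [Fintype κ] [Preorder R] [Zero R] [DecidableLT R]
    {f g : κ → R} (hle : ∀ x, g x ≤ f x) {x : κ} (hfx : 0 < f x) (hgx : ¬0 < g x) :
    #{y | 0 < g y} < #{y | 0 < f y} :=
  card_lt_card ⟨fun y hy => by simpa using (mem_filter.1 hy).2.trans_le (hle y),
    fun h => hgx (mem_filter.1 (h (by simpa using hfx))).2⟩

def Matrix.IsSumSymmetric {ι R : Type*} [Fintype ι] [AddCommMonoid R] (A : Matrix ι ι R) :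
    Prop :=
  ∀ j, ∑ i, A j i = ∑ i, A i j

namespace Matrix.IsSumSymmetric

variable {ι R : Type*} [Fintype ι] {A B : Matrix ι ι R}

theorem sub [AddCommGroup R] (hA : A.IsSumSymmetric) (hB : B.IsSumSymmetric) :
    (A - B).IsSumSymmetric := fun j => by
  simp only [sub_apply, sum_sub_distrib, hA j, hB j]

theorem smul [Semiring R] (hA : A.IsSumSymmetric) (c : R) : (c • A).IsSumSymmetric := fun j => by
  simp only [smul_apply, ← smul_sum, hA j]

theorem exists_perm_cycle_pos [AddCommMonoid R] [LinearOrder R] [IsOrderedAddMonoid R]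
    (hsum : A.IsSumSymmetric) (hA : ∀ i j, 0 ≤ A i j) (hne : A ≠ 0) :
    ∃ (α : Finset ι) (e : Equiv.Perm ι), α.Nonempty ∧ (∀ i, i ∈ α ↔ e i ∈ α) ∧
      ∀ i ∈ α, 0 < A i (e i) := by
  obtain ⟨a, b, hab⟩ : ∃ a b, 0 < A a b := by
    by_contra! h
    exact hne (Matrix.ext fun i j => (h i j).antisymm (hA i j))
  refine exists_perm_cycle_of_rel (fun i j => 0 < A i j) hab fun i j hij => ?_
  have hrow : ∑ k, (0 : ι → R) k < ∑ k, A j k := by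
    rw [hsum j]
    simpa using hij.trans_le (single_le_sum (fun k _ => hA k j) (mem_univ i))
  simpa using exists_lt_of_sum_lt hrow

end Matrix.IsSumSymmetric

section circuitMatrix

variable {n : ℕ} {α : Finset (Fin n)} {e : Equiv.Perm (Fin n)}

theorem circuitMatrix_nonneg (α : Finset (Fin n)) (e : Equiv.Perm (Fin n)) (i j : Fin n) :
    0 ≤ circuitMatrix n α e i j := by
  simp only [circuitMatrix, of_apply]
  positivity

theorem circuitMatrix_apply (hα : ∀ i, i ∈ α ↔ e i ∈ α) (i j : Fin n) :
    circuitMatrix n α e i j = if i ∈ α ∧ j = e i then 1 else 0 := by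
  by_cases h : j = e i <;> simp [circuitMatrix, h, ← hα i]

theorem sum_circuitMatrix_row (hα : ∀ i, i ∈ α ↔ e i ∈ α) (i : Fin n) :
    ∑ j, circuitMatrix n α e i j = if i ∈ α then 1 else 0 := by
  by_cases hi : i ∈ α <;> simp [circuitMatrix_apply hα, hi]

theorem sum_circuitMatrix_col (hα : ∀ i, i ∈ α ↔ e i ∈ α) (j : Fin n) :
    ∑ i, circuitMatrix n α e i j = if j ∈ α then 1 else 0 := by
  simp [circuitMatrix_apply hα, ← Equiv.symm_apply_eq, ite_and, hα (e.symm j)]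

theorem isSumSymmetric_circuitMatrix (hα : ∀ i, i ∈ α ↔ e i ∈ α) :
    (circuitMatrix n α e).IsSumSymmetric := fun j => by
  rw [sum_circuitMatrix_row hα, sum_circuitMatrix_col hα]

theorem sub_smul_circuitMatrix_nonneg {A : Matrix (Fin n) (Fin n) ℝ} (hA : ∀ i j, 0 ≤ A i j)
    {c : ℝ} (hc : ∀ i ∈ α, c ≤ A i (e i)) (i j : Fin n) :
    0 ≤ (A - c • circuitMatrix n α e) i j := by
  simp only [circuitMatrix, Matrix.sub_apply, Matrix.smul_apply, of_apply, smul_eq_mul]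
  split_ifs with h
  · obtain ⟨hi, -, rfl⟩ := h
    linarith [hc i hi]
  · simpa using hA i j

end circuitMatrix

def IsCircuitCombination {n : ℕ} (A : Matrix (Fin n) (Fin n) ℝ) : Prop :=
  ∃ (k : ℕ) (αs : Fin k → Finset (Fin n)) (es : Fin k → Equiv.Perm (Fin n)) (lam : Fin k → ℝ),
    (∀ j, ∀ i, i ∈ αs j ↔ (es j) i ∈ αs j) ∧ (∀ j, 0 < lam j) ∧
      A = ∑ j, lam j • circuitMatrix n (αs j) (es j)

namespace IsCircuitCombination

variable {n : ℕ}

theorem zero : IsCircuitCombination (0 : Matrix (Fin n) (Fin n) ℝ) :=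
  ⟨0, Fin.elim0, Fin.elim0, Fin.elim0, Fin.rec0, Fin.rec0, by simp⟩

theorem smul_circuitMatrix_add {A : Matrix (Fin n) (Fin n) ℝ} (hA : IsCircuitCombination A)
    {α : Finset (Fin n)} {e : Equiv.Perm (Fin n)} (hα : ∀ i, i ∈ α ↔ e i ∈ α) {c : ℝ}
    (hc : 0 < c) : IsCircuitCombination (c • circuitMatrix n α e + A) := by
  obtain ⟨k, αs, es, lam, hαs, hlam, rfl⟩ := hA
  refine ⟨k + 1, Fin.cons α αs, Fin.cons e es, Fin.cons c lam, Fin.cases hα hαs,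
    Fin.cases hc hlam, ?_⟩
  simp [Fin.sum_univ_succ]

end IsCircuitCombination

theorem isCircuitCombination_of_isSumSymmetric {n : ℕ} {A : Matrix (Fin n) (Fin n) ℝ}
    (hsum : A.IsSumSymmetric) (hA : ∀ i j, 0 ≤ A i j) : IsCircuitCombination A := by
  induction hN : #{p : Fin n × Fin n | 0 < A p.1 p.2} using Nat.strong_induction_on
    generalizing A with
  | _ N ih =>
    by_cases hA0 : A = 0
    · exact hA0 ▸ .zero
    obtain ⟨α, e, hαne, hα, hpos⟩ := hsum.exists_perm_cycle_pos hA hA0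
    obtain ⟨i₀, hi₀, hmin⟩ := α.exists_mem_eq_inf' hαne fun i => A i (e i)
    set c := α.inf' hαne fun i => A i (e i)
    have hc : 0 < c := (lt_inf'_iff _).2 hpos
    set A' := A - c • circuitMatrix n α e
    have hA' : ∀ i j, 0 ≤ A' i j := sub_smul_circuitMatrix_nonneg hA fun i hi => inf'_le _ hi
    have hle : ∀ p : Fin n × Fin n, A' p.1 p.2 ≤ A p.1 p.2 := fun p => by
      simpa [A'] using mul_nonneg hc.le (circuitMatrix_nonneg α e p.1 p.2)
    have hzero : A' i₀ (e i₀) = 0 := by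
      simp [A', circuitMatrix_apply hα, hi₀, hmin]
    have hlt := card_filter_pos_lt_of_le hle (x := (i₀, e i₀)) (hpos i₀ hi₀) (by simp [hzero])
    have hA'comb := ih _ (hN ▸ hlt) (hsum.sub ((isSumSymmetric_circuitMatrix hα).smul c)) hA' rfl
    simpa [A'] using hA'comb.smul_circuitMatrix_add hα hc

theorem sum_symmetric_eq_sum_circuit (n : ℕ) (A : Matrix (Fin n) (Fin n) ℝ)
    (hA : ∀ i j, 0 ≤ A i j)
    (hsum : ∀ j, ∑ i, A j i = ∑ i, A i j) :
    ∃ (k : ℕ) (αs : Fin k → Finset (Fin n)) (es : Fin k → Equiv.Perm (Fin n))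
      (lam : Fin k → ℝ),
      (∀ j, ∀ i, i ∈ αs j ↔ (es j) i ∈ αs j) ∧
      (∀ j, 0 < lam j) ∧
      A = ∑ j, lam j • circuitMatrix n (αs j) (es j) :=
  isCircuitCombination_of_isSumSymmetric hsum hA
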